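/- In the Smith–Volterra–Cantor construction with ∑ r_k < ∞, each constituent closed interval I_{n,k} of K_n (of length ℓ_n = 2^{-n}∏_{j<n}(1-r_j)) satisfies Leb(I_{n,k} ∩ (ℝ \ K)) = ℓ_n·(1 - ∏_{j≥n}(1 - r_j)). -/

import Mathlib

open MeasureTheory Filter

noncomputable def svcLen (r : ℕ → ℝ) : ℕ → ℝ
  | 0 => 1
  | n + 1 => (1 - r n) / 2 * svcLen r n

noncomputable def svcLeft (r : ℕ → ℝ) : ℕ → ℕ → ℝ
  | 0, _ => 0
  | n + 1, k =>
      if k % 2 = 0 then svcLeft r n (k / 2)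
      else svcLeft r n (k / 2) + svcLen r n - svcLen r (n + 1)

/-- The `n`-th stage of the Smith–Volterra–Cantor construction. -/
noncomputable def svcStage (r : ℕ → ℝ) (n : ℕ) : Set ℝ :=
  ⋃ k ∈ Finset.range (2 ^ n), Set.Icc (svcLeft r n k) (svcLeft r n k + svcLen r n)

/-- The Smith–Volterra–Cantor set associated with `r`. -/
noncomputable def svcSet (r : ℕ → ℝ) : Set ℝ := ⋂ n, svcStage r n

/-!
Inside `I_{n,k}` the stage `K_{n+m}` is the disjoint union of the `2^m` descendants of `I_{n,k}`,
each of length `ℓ_{n+m}`, so it has measure `ℓ_n ∏_{j<m} (1 - r_{n+j})`. These sets decrease to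
`K ∩ I_{n,k}`, so by continuity of measure `Leb(K ∩ I_{n,k}) = ℓ_n Q`, and the complement of `K`
takes the remaining `ℓ_n (1 - Q)`.
-/

section SmithVolterraCantor

variable {r : ℕ → ℝ}

def svcInterval (r : ℕ → ℝ) (n k : ℕ) : Set ℝ :=
  Set.Icc (svcLeft r n k) (svcLeft r n k + svcLen r n)

lemma svcStage_eq_biUnion (r : ℕ → ℝ) (n : ℕ) :
    svcStage r n = ⋃ k ∈ Finset.range (2 ^ n), svcInterval r n k := rfl

lemma volume_svcInterval (r : ℕ → ℝ) (n k : ℕ) :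
    volume (svcInterval r n k) = ENNReal.ofReal (svcLen r n) := by
  rw [svcInterval, Real.volume_Icc, add_sub_cancel_left]

lemma svcLen_pos (hr : ∀ n, r n < 1) (n : ℕ) : 0 < svcLen r n := by
  induction n with
  | zero => exact one_pos
  | succ n ih => exact mul_pos (by linarith [hr n]) ih

lemma two_mul_svcLen_succ_lt (hr : ∀ n, r n ∈ Set.Ioo 0 1) (n : ℕ) :
    2 * svcLen r (n + 1) < svcLen r n := by
  have hpos := svcLen_pos (fun n => (hr n).2) n
  rw [svcLen]
  nlinarith [(hr n).1]

lemma svcLen_add (r : ℕ → ℝ) (n m : ℕ) :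
    2 ^ m * svcLen r (n + m) = svcLen r n * ∏ j ∈ Finset.range m, (1 - r (n + j)) := by
  induction m with
  | zero => simp
  | succ m ih =>
    rw [Finset.prod_range_succ, ← add_assoc, svcLen]
    linear_combination (1 - r (n + m)) * ih

lemma svcInterval_even (r : ℕ → ℝ) (n k : ℕ) :
    svcInterval r (n + 1) (2 * k) =
      Set.Icc (svcLeft r n k) (svcLeft r n k + svcLen r (n + 1)) := by
  simp [svcInterval, svcLeft]

lemma svcInterval_odd (r : ℕ → ℝ) (n k : ℕ) :
    svcInterval r (n + 1) (2 * k + 1) =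
      Set.Icc (svcLeft r n k + svcLen r n - svcLen r (n + 1)) (svcLeft r n k + svcLen r n) := by
  simp [svcInterval, svcLeft, Nat.add_div_of_dvd_right]

lemma svcInterval_succ_subset (hr : ∀ n, r n ∈ Set.Ioo 0 1) (n k : ℕ) :
    svcInterval r (n + 1) k ⊆ svcInterval r n (k / 2) := by
  have hlt := two_mul_svcLen_succ_lt hr n
  have hpos := svcLen_pos (fun n => (hr n).2) (n + 1)
  obtain ⟨j, rfl | rfl⟩ := Nat.even_or_odd' k
  · rw [svcInterval_even, Nat.mul_div_cancel_left j two_pos]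
    exact Set.Icc_subset_Icc le_rfl (by linarith)
  · rw [svcInterval_odd, show (2 * j + 1) / 2 = j by omega]
    exact Set.Icc_subset_Icc (by linarith) le_rfl

lemma svcInterval_add_subset (hr : ∀ n, r n ∈ Set.Ioo 0 1) (n m k : ℕ) :
    svcInterval r (n + m) k ⊆ svcInterval r n (k / 2 ^ m) := by
  induction m generalizing k with
  | zero => simp
  | succ m ih =>
    rw [pow_succ', ← Nat.div_div_eq_div_mul]
    exact (svcInterval_succ_subset hr (n + m) k).trans (ih (k / 2))

lemma disjoint_svcInterval_siblings (hr : ∀ n, r n ∈ Set.Ioo 0 1) (n k : ℕ) :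
    Disjoint (svcInterval r (n + 1) (2 * k)) (svcInterval r (n + 1) (2 * k + 1)) := by
  rw [svcInterval_even, svcInterval_odd, Set.disjoint_left]
  rintro x ⟨-, hx_left⟩ ⟨hx_right, -⟩
  linarith [two_mul_svcLen_succ_lt hr n]

lemma disjoint_svcInterval (hr : ∀ n, r n ∈ Set.Ioo 0 1) {n j k : ℕ} (hjk : j ≠ k)
    (hj : j < 2 ^ n) (hk : k < 2 ^ n) : Disjoint (svcInterval r n j) (svcInterval r n k) := by
  induction n generalizing j k with
  | zero => omega
  | succ n ih =>
    by_cases hpar : j / 2 = k / 2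
    · rcases Nat.lt_or_gt_of_ne hjk with h | h
      · obtain ⟨i, rfl, rfl⟩ : ∃ i, j = 2 * i ∧ k = 2 * i + 1 := ⟨j / 2, by omega, by omega⟩
        exact disjoint_svcInterval_siblings hr n i
      · obtain ⟨i, rfl, rfl⟩ : ∃ i, k = 2 * i ∧ j = 2 * i + 1 := ⟨k / 2, by omega, by omega⟩
        exact (disjoint_svcInterval_siblings hr n i).symm
    · rw [pow_succ] at hj hk
      exact (ih hpar (by omega) (by omega)).mono
        (svcInterval_succ_subset hr n j) (svcInterval_succ_subset hr n k)

lemma svcStage_antitone (hr : ∀ n, r n ∈ Set.Ioo 0 1) : Antitone (svcStage r) := by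
  refine antitone_nat_of_succ_le fun n x hx => ?_
  simp only [svcStage_eq_biUnion, Set.mem_iUnion, Finset.mem_range, exists_prop] at hx ⊢
  obtain ⟨k, hk, hx⟩ := hx
  rw [pow_succ] at hk
  exact ⟨k / 2, by omega, svcInterval_succ_subset hr n k hx⟩

lemma measurableSet_svcStage (r : ℕ → ℝ) (n : ℕ) : MeasurableSet (svcStage r n) :=
  (Finset.range (2 ^ n)).measurableSet_biUnion fun _ _ => measurableSet_Icc

lemma measurableSet_svcSet (r : ℕ → ℝ) : MeasurableSet (svcSet r) :=
  .iInter (measurableSet_svcStage r)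

lemma svcStage_add_inter_svcInterval (hr : ∀ n, r n ∈ Set.Ioo 0 1) {n k : ℕ} (hk : k < 2 ^ n)
    (m : ℕ) : svcStage r (n + m) ∩ svcInterval r n k =
      ⋃ k' ∈ Finset.Ico (k * 2 ^ m) ((k + 1) * 2 ^ m), svcInterval r (n + m) k' := by
  have hbound : (k + 1) * 2 ^ m ≤ 2 ^ (n + m) := by
    rw [pow_add]; exact Nat.mul_le_mul_right _ hk
  ext x
  simp only [svcStage_eq_biUnion, Set.mem_inter_iff, Set.mem_iUnion, Finset.mem_range,
    Finset.mem_Ico, exists_prop]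
  constructor
  · rintro ⟨⟨k', hk', hx⟩, hxk⟩
    have hanc : k' / 2 ^ m = k := by
      by_contra hne
      have hlt : k' / 2 ^ m < 2 ^ n := Nat.div_lt_of_lt_mul (by rwa [← pow_add, add_comm])
      exact Set.disjoint_left.1 (disjoint_svcInterval hr hne hlt hk)
        (svcInterval_add_subset hr n m k' hx) hxk
    refine ⟨k', ⟨(Nat.le_div_iff_mul_le (by positivity)).1 hanc.ge, ?_⟩, hx⟩
    exact (Nat.div_lt_iff_lt_mul (by positivity)).1 (hanc ▸ k.lt_succ_self)
  · rintro ⟨k', ⟨hlo, hhi⟩, hx⟩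
    refine ⟨⟨k', by omega, hx⟩, ?_⟩
    simpa [Nat.div_eq_of_lt_le hlo hhi] using svcInterval_add_subset hr n m k' hx


lemma volume_svcStage_add_inter_svcInterval (hr : ∀ n, r n ∈ Set.Ioo 0 1) {n k : ℕ}
    (hk : k < 2 ^ n) (m : ℕ) :
    volume (svcStage r (n + m) ∩ svcInterval r n k) =
      ENNReal.ofReal (svcLen r n * ∏ j ∈ Finset.range m, (1 - r (n + j))) := by
  have hbound : (k + 1) * 2 ^ m ≤ 2 ^ (n + m) := by
    rw [pow_add]; exact Nat.mul_le_mul_right _ hk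
  have hdisj : Set.PairwiseDisjoint ↑(Finset.Ico (k * 2 ^ m) ((k + 1) * 2 ^ m))
      (svcInterval r (n + m)) := fun i hi j hj hij => by
    simp only [Finset.coe_Ico, Set.mem_Ico] at hi hj
    exact disjoint_svcInterval hr hij (by omega) (by omega)
  rw [svcStage_add_inter_svcInterval hr hk, measure_biUnion_finset hdisj
    (fun _ _ => measurableSet_Icc)]
  simp only [volume_svcInterval, Finset.sum_const, Nat.card_Ico, add_one_mul,
    Nat.add_sub_cancel_left, nsmul_eq_mul, Nat.cast_pow, Nat.cast_ofNat]
  rw [← svcLen_add, ENNReal.ofReal_mul (by positivity), ENNReal.ofReal_pow zero_le_two,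
    ENNReal.ofReal_ofNat]

lemma volume_svcSet_inter_svcInterval (hr : ∀ n, r n ∈ Set.Ioo 0 1) {n k : ℕ}
    (hk : k < 2 ^ n) {Q : ℝ}
    (hQ : Tendsto (fun N => ∏ j ∈ Finset.range N, (1 - r (n + j))) atTop (nhds Q)) :
    volume (svcSet r ∩ svcInterval r n k) = ENNReal.ofReal (svcLen r n * Q) := by
  have hanti : Antitone fun m => svcStage r (n + m) ∩ svcInterval r n k :=
    fun a b hab => Set.inter_subset_inter_left _ (svcStage_antitone hr (by omega))
  have hlim := tendsto_measure_iInter_atTop (μ := volume)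
    (s := fun m => svcStage r (n + m) ∩ svcInterval r n k)
    (fun m => ((measurableSet_svcStage r _).inter measurableSet_Icc).nullMeasurableSet) hanti
    ⟨0, (measure_mono Set.inter_subset_right).trans_lt
      ((volume_svcInterval r n k).trans_lt ENNReal.ofReal_lt_top) |>.ne⟩
  have htail : ⋂ m, svcStage r (n + m) = ⋂ m, svcStage r m := by
    simpa only [add_comm] using (svcStage_antitone hr).iInter_nat_add n
  rw [← Set.iInter_inter, htail] at hlim
  refine tendsto_nhds_unique hlim ?_
  simpa only [Function.comp_def, volume_svcStage_add_inter_svcInterval hr hk] using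
    (ENNReal.continuous_ofReal.tendsto _).comp (hQ.const_mul (svcLen r n))

end SmithVolterraCantor

theorem interval_complement_measure_general (r : ℕ → ℝ) (hr : ∀ n, r n ∈ Set.Ioo (0 : ℝ) 1)
    (n k : ℕ) (hk : k < 2 ^ n) (Q : ℝ)
    (hQ : Tendsto (fun N => ∏ j ∈ Finset.range N, (1 - r (n + j))) atTop (nhds Q)) :
    volume (Set.Icc (svcLeft r n k) (svcLeft r n k + svcLen r n) ∩ (svcSet r)ᶜ)
      = ENNReal.ofReal (svcLen r n * (1 - Q)) := by
  have hQ_nonneg : 0 ≤ Q := ge_of_tendsto' hQ fun N =>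
    Finset.prod_nonneg fun j _ => sub_nonneg.2 (hr (n + j)).2.le
  have hsplit := measure_inter_add_sdiff (μ := volume) (svcInterval r n k)
    (measurableSet_svcSet r)
  rw [Set.inter_comm, volume_svcSet_inter_svcInterval hr hk hQ, volume_svcInterval,
    add_comm] at hsplit
  change volume (svcInterval r n k ∩ (svcSet r)ᶜ) = _
  rw [← Set.sdiff_eq, ENNReal.eq_sub_of_add_eq ENNReal.ofReal_ne_top hsplit,
    ← ENNReal.ofReal_sub _ (mul_nonneg (svcLen_pos (fun j => (hr j).2) n).le hQ_nonneg),
    mul_one_sub]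

/-- Each constituent closed interval `I_{n,k}` of the stage `K_n` (for `k < 2^n`), of length
`ℓ_n = svcLen r n`, satisfies `Leb(I_{n,k} ∩ (ℝ \ K)) = ℓ_n · (1 - ∏_{j ≥ n} (1 - r j))`,
where `Q` denotes the convergent tail product `∏_{j ≥ n} (1 - r j)`. -/
theorem interval_complement_measure (r : ℕ → ℝ) (hr : ∀ n, r n ∈ Set.Ioo (0 : ℝ) 1)
    (hsum : Summable r) (n k : ℕ) (hk : k < 2 ^ n) (Q : ℝ)
    (hQ : Tendsto (fun N => ∏ j ∈ Finset.range N, (1 - r (n + j))) atTop (nhds Q)) :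
    volume (Set.Icc (svcLeft r n k) (svcLeft r n k + svcLen r n) ∩ (svcSet r)ᶜ)
      = ENNReal.ofReal (svcLen r n * (1 - Q)) :=
  interval_complement_measure_general r hr n k hk Q hQ
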